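/- Every monomial of P_5 obtained by permuting the variables in one of the three monomials x_1^3x_2^4x_3^4x_4^7x_5^7, x_1^3x_2^4x_3^5x_4^6x_5^7, x_1^3x_2^5x_3^5x_4^6x_5^6 (all of degree 25, weight vector (3,3,4)) is strictly inadmissible. -/
import Mathlib


open MvPolynomial

noncomputable section

/-- `P n` is the polynomial algebra `F_2[x_1, …, x_n]`, with `x_{k+1}` corresponding to
the variable indexed by `k : Fin n`. -/
abbrev P (n : ℕ) : Type := MvPolynomial (Fin n) (ZMod 2)

/-- The total Steenrod square, the ring homomorphism determined by `x_i ↦ x_i + x_i^2`. -/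
def sqTot (n : ℕ) : P n →ₐ[ZMod 2] P n := bind₁ fun i => X i + X i ^ 2

/-- The Steenrod square `Sq^k`: on a homogeneous polynomial of degree `d` it is the
homogeneous component of degree `d + k` of the total square, extended additively. -/
def SqK (n k : ℕ) (f : P n) : P n :=
  ∑ d ∈ Finset.range (f.totalDegree + 1),
    homogeneousComponent (d + k) (sqTot n (homogeneousComponent d f))

/-- `A^+ P_n = Σ_{j ≥ 1} Sq^j(P_n)`, the submodule of hit polynomials. -/
def hitS (n : ℕ) : Submodule (ZMod 2) (P n) :=
  Submodule.span (ZMod 2) {g | ∃ j, 1 ≤ j ∧ ∃ h, g = SqK n j h}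

/-- `A_s^+ P_n = Σ_{1 ≤ j < 2^s} Sq^j(P_n)`. -/
def AplusS (n s : ℕ) : Submodule (ZMod 2) (P n) :=
  Submodule.span (ZMod 2) {g | ∃ j, 1 ≤ j ∧ j < 2 ^ s ∧ ∃ h, g = SqK n j h}

/-- Degree of a monomial given by its exponent vector. -/
def mdeg {n : ℕ} (a : Fin n →₀ ℕ) : ℕ := ∑ j, a j

/-- The weight vector of a monomial, zero-based: `wt a i = ω_{i+1}(x) = Σ_j α_i(a_j)`. -/
def wt {n : ℕ} (a : Fin n →₀ ℕ) (i : ℕ) : ℕ := ∑ j, a j / 2 ^ i % 2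

/-- Left-lexicographic strict order on weight vectors. -/
def lexLt (w w' : ℕ → ℕ) : Prop := ∃ i, (∀ j, j < i → w j = w' j) ∧ w i < w' i

def lexLe (w w' : ℕ → ℕ) : Prop := w = w' ∨ lexLt w w'

/-- `P_n^-(ω)`: span of monomials of degree `D = deg ω` with weight vector `< ω`. -/
def PnLt (n D : ℕ) (w : ℕ → ℕ) : Submodule (ZMod 2) (P n) :=
  Submodule.span (ZMod 2)
    {p | ∃ a : Fin n →₀ ℕ, mdeg a = D ∧ lexLt (wt a) w ∧ p = monomial a 1}

/-- `P_n(ω)`: span of monomials of degree `D = deg ω` with weight vector `≤ ω`. -/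
def PnLe (n D : ℕ) (w : ℕ → ℕ) : Submodule (ZMod 2) (P n) :=
  Submodule.span (ZMod 2)
    {p | ∃ a : Fin n →₀ ℕ, mdeg a = D ∧ lexLe (wt a) w ∧ p = monomial a 1}

/-- The order on monomials (of a common degree): first by weight vector, then by
exponent vector, both left-lexicographically. -/
def monLt {n : ℕ} (a b : Fin n →₀ ℕ) : Prop :=
  lexLt (wt a) (wt b) ∨
    (wt a = wt b ∧ ∃ j : Fin n, (∀ k, k < j → a k = b k) ∧ a j < b j)

/-- A monomial is inadmissible if it is congruent, modulo hit elements, to a sum of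
strictly smaller monomials of the same degree. -/
def Inadmissible {n : ℕ} (a : Fin n →₀ ℕ) : Prop :=
  ∃ S : Finset (Fin n →₀ ℕ), (∀ b ∈ S, mdeg b = mdeg a ∧ monLt b a) ∧
    ((monomial a 1 : P n) + ∑ b ∈ S, monomial b 1) ∈ hitS n

def Admissible {n : ℕ} (a : Fin n →₀ ℕ) : Prop := ¬ Inadmissible a

/-- Strict inadmissibility: with `s` the top of the weight vector, the monomial is
congruent to a sum of smaller monomials modulo `A_s^+ P_n`. -/
def StrictlyInadmissible {n : ℕ} (a : Fin n →₀ ℕ) : Prop :=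
  ∃ s : ℕ, 1 ≤ s ∧ wt a (s - 1) ≠ 0 ∧ (∀ i, s ≤ i → wt a i = 0) ∧
    ∃ S : Finset (Fin n →₀ ℕ), (∀ b ∈ S, mdeg b = mdeg a ∧ monLt b a) ∧
      ((monomial a 1 : P n) + ∑ b ∈ S, monomial b 1) ∈ AplusS n s

/-- Exponent vector from a tuple of exponents. -/
def ev {n : ℕ} (v : Fin n → ℕ) : Fin n →₀ ℕ := Finsupp.equivFunOnFinite.symm v

/-- `ν_k(x)`, the exponent of the (1-based) variable `x_k` in a monomial. -/
def nuE {m : ℕ} (b : Fin m →₀ ℕ) (k : ℕ) : ℕ := if h : k - 1 < m then b ⟨k - 1, h⟩ else 0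

/-- `u`-compatibility of a monomial of `P_{n-1}` with a pair `(i; I)` (only `I` matters);
by convention every monomial is `1`-compatible with `(i; ∅)`. -/
def uCompat {m : ℕ} (I : List ℕ) (u : ℕ) (b : Fin m →₀ ℕ) : Prop :=
  if I = [] then u = 1 else
    1 ≤ u ∧ u ≤ I.length ∧
    (∀ t, 1 ≤ t → t < u → nuE b (I.getD (t - 1) 0 - 1) = 2 ^ I.length - 1) ∧
    2 ^ I.length - 1 < nuE b (I.getD (u - 1) 0 - 1) ∧
    (∀ t, 1 ≤ t → t ≤ u → Nat.testBit (nuE b (I.getD (u - 1) 0 - 1)) (I.length - t) = true) ∧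
    (∀ t, u < t → t ≤ I.length → Nat.testBit (nuE b (I.getD (t - 1) 0 - 1)) (I.length - t) = true)

/-- The exponent vector of `x_{(I,u)} = x_{i_u}^{2^{r-1}+⋯+2^{r-u}} Π_{u<t≤r} x_{i_t}^{2^{r-t}}`. -/
def xIuExp (n : ℕ) (I : List ℕ) (u : ℕ) : Fin n → ℕ := fun k =>
  (if I.getD (u - 1) 0 = (k : ℕ) + 1 then 2 ^ I.length - 2 ^ (I.length - u) else 0) +
  ∑ t ∈ Finset.Icc (u + 1) I.length,
    if I.getD (t - 1) 0 = (k : ℕ) + 1 then 2 ^ (I.length - t) else 0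

/-- The variable substitution underlying `f_i : P_{n-1} → P_n` (`x_j ↦ x_j` for `j < i`,
`x_j ↦ x_{j+1}` for `j ≥ i`, in 1-based labels). -/
def fIdx (n i : ℕ) (j : Fin (n - 1)) : Fin n :=
  if (j : ℕ) + 1 < i then ⟨j, by have := j.isLt; omega⟩
  else ⟨(j : ℕ) + 1, by have := j.isLt; omega⟩

open Classical in
/-- `φ_{(i;I)}` evaluated on the monomial of `P_{n-1}` with exponent vector `b`:
`(x_i^{2^r - 1} f_i(x)) / x_{(I,u)}` if `x` is `u`-compatible with `(i;I)` for some `u`,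
and `0` otherwise.  Here `i` and the entries of `I` are 1-based variable labels. -/
def phiMon (n i : ℕ) (I : List ℕ) (b : Fin (n - 1) →₀ ℕ) : P n :=
  if h : ∃ u, uCompat I u b then
    monomial (ev fun k : Fin n =>
      (if (k : ℕ) + 1 = i then 2 ^ I.length - 1 else 0) +
        Finsupp.mapDomain (fIdx n i) b k - xIuExp n I (Classical.choose h) k) 1
  else 0

/-- Exponent vector of `X^e = (x_1 ⋯ x_m)^e` in `P_m`. -/
def Xexp (m e : ℕ) : Fin m →₀ ℕ := ev fun _ => e

/-- `X_u^e = (Π_{j ≠ u} x_j)^e` in `P_n` (`u` 1-based). -/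
def XjMon (n u e : ℕ) : P n := monomial (ev fun k : Fin n => if (k : ℕ) + 1 = u then 0 else e) 1

/-- `x_u^e` in `P_n` (`u` 1-based). -/
def xvMon (n u e : ℕ) : P n := monomial (ev fun k : Fin n => if (k : ℕ) + 1 = u then e else 0) 1

/-- The weight vector `((n-1)^{(d)}, 1)` (zero-based indexing). -/
def wSpike (n d : ℕ) : ℕ → ℕ := fun i => if i < d then n - 1 else if i = d then 1 else 0

/-- Kameko's map `ψ : P_5 → P_5`, `x_1x_2x_3x_4x_5 · y^2 ↦ y` on monomials, `0` otherwise. -/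
def psi : P 5 →ₗ[ZMod 2] P 5 :=
  (basisMonomials (Fin 5) (ZMod 2)).constr (ZMod 2) fun a =>
    if ∀ j, Odd (a j) then monomial (Finsupp.mapRange (· / 2) (Nat.zero_div 2) a) 1 else 0

/-- The Σ₅-invariant subspace of a subspace `V` of `QP_5 = P_5 / A^+P_5`: classes in `V`
having a representative `f` with `[σ · f] = [f]` for all permutations `σ` of the variables. -/
def invSub (V : Submodule (ZMod 2) (P 5 ⧸ hitS 5)) : Submodule (ZMod 2) (P 5 ⧸ hitS 5) where
  carrier := {q | q ∈ V ∧ ∃ f : P 5, (hitS 5).mkQ f = q ∧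
      ∀ σ : Equiv.Perm (Fin 5), (hitS 5).mkQ (rename (⇑σ) f) = q}
  add_mem' := by
    rintro a b ⟨haV, f, hf, hfa⟩ ⟨hbV, g, hg, hgb⟩
    refine ⟨V.add_mem haV hbV, f + g, ?_, fun σ => ?_⟩
    · simp [map_add, hf, hg]
    · simp [map_add, hfa σ, hgb σ]
  zero_mem' := ⟨V.zero_mem, 0, by simp, fun σ => by simp⟩
  smul_mem' := by
    rintro c a ⟨haV, f, hf, hfa⟩
    refine ⟨V.smul_mem c haV, c • f, ?_, fun σ => ?_⟩
    · simp [map_smul, hf]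
    · simp [map_smul, hfa σ]

/-- The maps `ρ_1, …, ρ_5` generating the action of `GL_5` on `P_5`:
`ρ_i` (for `1 ≤ i ≤ 4`) swaps `x_i, x_{i+1}`; `ρ_5` sends `x_1 ↦ x_1 + x_2`. -/
def rho5 (i : ℕ) : P 5 → P 5 := fun f =>
  if i = 1 then rename (⇑(Equiv.swap (0 : Fin 5) 1)) f
  else if i = 2 then rename (⇑(Equiv.swap (1 : Fin 5) 2)) f
  else if i = 3 then rename (⇑(Equiv.swap (2 : Fin 5) 3)) f
  else if i = 4 then rename (⇑(Equiv.swap (3 : Fin 5) 4)) f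
  else if i = 5 then MvPolynomial.aeval (R := ZMod 2)
    (fun j : Fin 5 => if j = 0 then X 0 + X 1 else X j) f
  else f

/-- The action of an invertible matrix on `P_5` by linear substitution of the variables. -/
def glAct (g : Matrix (Fin 5) (Fin 5) (ZMod 2)) (f : P 5) : P 5 :=
  MvPolynomial.aeval (R := ZMod 2) (fun i : Fin 5 => ∑ j : Fin 5, g i j • X j) f

/-- The weight vector `(3,3,4)` (zero-based indexing). -/
def w334 : ℕ → ℕ := fun i => if i = 0 then 3 else if i = 1 then 3 else if i = 2 then 4 else 0

/-- The weight vector `(3,3,2,1)` (zero-based indexing). -/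
def w3321 : ℕ → ℕ := fun i =>
  if i = 0 then 3 else if i = 1 then 3 else if i = 2 then 2 else if i = 3 then 1 else 0

section Master
open Finset

def termsF (k : ℕ) (b : Fin 5 → ℕ) : Finset (Fin 5 → ℕ) :=
  ((Fintype.piFinset fun _ : Fin 5 => Finset.range (k + 1)).filter
    fun p => (∑ i, p i) = k ∧ (∏ i, (b i).choose (p i)) % 2 = 1).image fun p => b + p

lemma ev_apply (b : Fin 5 → ℕ) (i : Fin 5) : ev b i = b i := rfl

lemma degree_ev (b : Fin 5 → ℕ) : (ev b).degree = ∑ i, b i := by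
  rw [Finsupp.degree]
  exact Finset.sum_subset (Finset.subset_univ _)
    (fun i _ hi => Finsupp.notMem_support_iff.mp hi)

lemma hc_monomial (m : ℕ) (d : Fin 5 →₀ ℕ) (r : ZMod 2) :
    homogeneousComponent m (monomial d r) = if d.degree = m then monomial d r else 0 := by
  by_cases hr : r = 0
  · simp [hr]
  · rw [homogeneousComponent_of_mem
      ((mem_homogeneousSubmodule _ _).2 (isHomogeneous_monomial r rfl))]
    by_cases h : d.degree = m
    · simp [h]
    · rw [if_neg (fun hh : m = d.degree => h hh.symm), if_neg h]

lemma natCast_zmod2 (N : ℕ) : (N : ZMod 2) = if N % 2 = 1 then 1 else 0 := by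
  rw [← ZMod.natCast_mod N 2]
  rcases Nat.mod_two_eq_zero_or_one N with h | h <;> simp [h]

lemma factor_expand (i : Fin 5) (m : ℕ) :
    (X i + X i ^ 2 : P 5) ^ m
      = ∑ k ∈ Finset.range (m + 1), ((m.choose k : ℕ) : ZMod 2) • X i ^ (m + k) := by
  have h1 : (X i + X i ^ 2 : P 5) = X i * (X i + 1) := by ring
  rw [h1, mul_pow, add_pow, Finset.mul_sum]
  refine Finset.sum_congr rfl fun k hk => ?_
  rw [Algebra.smul_def]
  push_cast
  ring

lemma prod_X_pow (m : Fin 5 → ℕ) : (∏ i, (X i : P 5) ^ (m i)) = monomial (ev m) 1 := by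
  have hm : ∀ i, m i = ev m i := fun _ => rfl
  simp_rw [hm]
  rw [← prod_X_pow_eq_monomial]
  exact (Finset.prod_subset (Finset.subset_univ _)
    (fun i _ hi => by rw [Finsupp.notMem_support_iff.mp hi, pow_zero])).symm

lemma sqK_monomial (k : ℕ) (b : Fin 5 → ℕ) :
    SqK 5 k (monomial (ev b) (1 : ZMod 2)) = ∑ c ∈ termsF k b, monomial (ev c) 1 := by
  have hdeg : (ev b).degree = ∑ i, b i := degree_ev b
  have htd : (monomial (ev b) (1 : ZMod 2)).totalDegree = ∑ i, b i := by
    rw [totalDegree_monomial _ one_ne_zero, Finsupp.sum_fintype]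
    · exact Finset.sum_congr rfl fun i _ => rfl
    · intro; rfl
  have h0 : SqK 5 k (monomial (ev b) 1)
      = homogeneousComponent ((∑ i, b i) + k) (sqTot 5 (monomial (ev b) 1)) := by
    rw [SqK, htd, Finset.sum_eq_single_of_mem (∑ i, b i) (Finset.self_mem_range_succ _)]
    · rw [hc_monomial, if_pos hdeg]
    · intro d _ hd
      rw [hc_monomial, if_neg (by rw [hdeg]; exact fun h => hd h.symm), map_zero, map_zero]
  have h1 : sqTot 5 (monomial (ev b) (1 : ZMod 2)) = ∏ i, (X i + X i ^ 2) ^ (b i) := by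
    rw [sqTot, bind₁_monomial, map_one, one_mul]
    exact Finset.prod_subset (Finset.subset_univ _)
      (fun i _ hi => by rw [Finsupp.notMem_support_iff.mp hi, pow_zero])
  rw [h0, h1]
  simp_rw [factor_expand]
  rw [Finset.prod_univ_sum, map_sum]
  have prod_smul_fin : ∀ (c : Fin 5 → ZMod 2) (f : Fin 5 → P 5),
      (∏ i, c i • f i) = (∏ i, c i) • ∏ i, f i := by
    intro c f
    simp_rw [Algebra.smul_def]
    rw [Finset.prod_mul_distrib, ← map_prod]
  have hterm : ∀ p : Fin 5 → ℕ,
      (∏ i, ((((b i).choose (p i) : ℕ) : ZMod 2) • X i ^ (b i + p i)) : P 5)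
        = (((∏ i, (b i).choose (p i) : ℕ) : ZMod 2) : ZMod 2) • monomial (ev (b + p)) 1 := by
    intro p
    rw [prod_smul_fin (fun i => (((b i).choose (p i) : ℕ) : ZMod 2))
      (fun i => X i ^ (b i + p i)), Nat.cast_prod, prod_X_pow (fun i => b i + p i)]
    rfl
  simp_rw [hterm, map_smul, hc_monomial, degree_ev]
  have hcond : ∀ p : Fin 5 → ℕ,
      ((∑ i, ((b + p) i)) = (∑ i, b i) + k) ↔ ((∑ i, p i) = k) := by
    intro p
    rw [show (∑ i, ((b + p) i)) = (∑ i, b i) + (∑ i, p i) from by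
      rw [← Finset.sum_add_distrib]; rfl]
    omega
  simp_rw [smul_ite, smul_zero]
  have hF : ∀ p : Fin 5 → ℕ,
      (if (∑ i, ((b + p) i)) = (∑ i, b i) + k
         then (((∏ i, (b i).choose (p i) : ℕ) : ZMod 2)) • monomial (ev (b + p)) (1 : ZMod 2)
         else 0)
        = (if (∑ i, p i) = k ∧ (∏ i, (b i).choose (p i)) % 2 = 1
            then monomial (ev (b + p)) (1 : ZMod 2) else 0) := by
    intro p
    rw [natCast_zmod2]
    have hc2 := hcond p
    by_cases h2 : (∏ i, (b i).choose (p i)) % 2 = 1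
    · rw [if_pos h2, one_smul]
      by_cases h1 : (∑ i, p i) = k
      · rw [if_pos (hc2.mpr h1), if_pos ⟨h1, h2⟩]
      · rw [if_neg (fun hh => h1 (hc2.mp hh)), if_neg (fun hh => h1 hh.1)]
    · rw [if_neg h2, zero_smul, ite_self, if_neg (fun hh => h2 hh.2)]
  simp_rw [hF]
  -- change index set from piFinset (range (b i + 1)) to piFinset (range (k+1))
  have hsub1 : (Fintype.piFinset fun i : Fin 5 => Finset.range (b i + 1))
      ⊆ Fintype.piFinset fun i : Fin 5 => Finset.range (b i + k + 1) :=
    Fintype.piFinset_subset _ _ fun i => Finset.range_subset_range.2 (by omega)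
  have hsub2 : (Fintype.piFinset fun _ : Fin 5 => Finset.range (k + 1))
      ⊆ Fintype.piFinset fun i : Fin 5 => Finset.range (b i + k + 1) :=
    Fintype.piFinset_subset _ _ fun i => Finset.range_subset_range.2 (by omega)
  rw [Finset.sum_subset hsub1 ?h1, ← Finset.sum_subset hsub2 ?h2]
  case h1 =>
    intro p hp hnp
    rw [Fintype.mem_piFinset] at hnp
    push_neg at hnp
    obtain ⟨i, hi⟩ := hnp
    rw [Finset.mem_range] at hi
    push_neg at hi
    have : (∏ i, (b i).choose (p i)) = 0 :=
      Finset.prod_eq_zero (Finset.mem_univ i) (Nat.choose_eq_zero_of_lt (by omega))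
    simp [this]
  case h2 =>
    intro p hp hnp
    rw [Fintype.mem_piFinset] at hnp
    push_neg at hnp
    obtain ⟨i, hi⟩ := hnp
    rw [Finset.mem_range] at hi
    push_neg at hi
    have : (∑ j, p j) ≠ k := by
      have hle : p i ≤ ∑ j, p j := Finset.single_le_sum (fun _ _ => Nat.zero_le _) (Finset.mem_univ i)
      omega
    simp [this]
  -- now filtered sum = image sum
  rw [termsF, Finset.sum_image ?hinj, Finset.sum_filter]
  case hinj =>
    intro p _ q _ h
    funext j
    have := congrFun h j
    simpa using this

end Master
section Sound

def wtN (c : Fin 5 → ℕ) (i : ℕ) : ℕ := ∑ j, c j / 2 ^ i % 2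

lemma wt_ev (c : Fin 5 → ℕ) : wt (ev c) = wtN c := rfl

lemma mdeg_ev (c : Fin 5 → ℕ) : mdeg (ev c) = ∑ j, c j := rfl

def monLtP (c d : Fin 5 → ℕ) : Prop :=
  (∃ i, i < 6 ∧ (∀ j, j < i → wtN c j = wtN d j) ∧ wtN c i < wtN d i) ∨
  ((∀ j, j < 6 → wtN c j = wtN d j) ∧ ∃ i : Fin 5, (∀ k, k < i → c k = d k) ∧ c i < d i)

instance (c d : Fin 5 → ℕ) : Decidable (monLtP c d) := by unfold monLtP; infer_instance

lemma wt_ev_high (c : Fin 5 → ℕ) (m : ℕ) (hb : ∀ j, c j < 2 ^ m) :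
    ∀ i, m ≤ i → wt (ev c) i = 0 := by
  intro i hi
  rw [wt_ev]
  apply Finset.sum_eq_zero
  intro j _
  rw [Nat.div_eq_of_lt (lt_of_lt_of_le (hb j) (Nat.pow_le_pow_right (by norm_num) hi))]
  rfl

lemma monLt_of_monLtP (c d : Fin 5 → ℕ) (hc : ∀ j, c j < 64) (hd : ∀ j, d j < 64)
    (h : monLtP c d) : monLt (ev c) (ev d) := by
  rcases h with ⟨i, _, hpre, hlt⟩ | ⟨hw, i, hpre, hlt⟩
  · exact Or.inl ⟨i, hpre, hlt⟩
  · refine Or.inr ⟨?_, i, hpre, hlt⟩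
    funext i
    by_cases hi : i < 6
    · exact hw i hi
    · rw [wt_ev_high c 6 hc i (by omega), wt_ev_high d 6 hd i (by omega)]

lemma ev_inj (x y : Fin 5 → ℕ) (h : ev x = ev y) : x = y :=
  funext fun j => by rw [← ev_apply x j, ← ev_apply y j, h]

lemma add_self_P5 (x : P 5) : x + x = 0 := by
  have : x + x = ((1 : ZMod 2) + 1) • x := by rw [add_smul, one_smul]
  rw [this, show ((1 : ZMod 2) + 1) = 0 from by decide, zero_smul]

lemma sum_symmDiff_P5 (s t : Finset (Fin 5 → ℕ)) (M : (Fin 5 → ℕ) → P 5) :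
    ∑ c ∈ symmDiff s t, M c = (∑ c ∈ s, M c) + ∑ c ∈ t, M c := by
  have h1 : (∑ c ∈ s \ (s ∩ t), M c) + ∑ c ∈ s ∩ t, M c = ∑ c ∈ s, M c :=
    Finset.sum_sdiff Finset.inter_subset_left
  have h2 : (∑ c ∈ t \ (t ∩ s), M c) + ∑ c ∈ t ∩ s, M c = ∑ c ∈ t, M c :=
    Finset.sum_sdiff Finset.inter_subset_left
  rw [Finset.sdiff_inter_self_left] at h1 h2
  have h3 : symmDiff s t = (s \ t) ∪ (t \ s) := by rw [symmDiff_def, Finset.sup_eq_union]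
  rw [Finset.inter_comm] at h2
  rw [h3, Finset.sum_union disjoint_sdiff_sdiff, ← h1, ← h2]
  have h4 := add_self_P5 (∑ c ∈ s ∩ t, M c)
  linear_combination -h4

def TL (L : List (ℕ × (Fin 5 → ℕ))) : Finset (Fin 5 → ℕ) :=
  L.foldr (fun t s => symmDiff (termsF t.1 t.2) s) ∅

lemma sum_TL (L : List (ℕ × (Fin 5 → ℕ))) :
    ∑ c ∈ TL L, monomial (ev c) (1 : ZMod 2)
      = (L.map fun t => SqK 5 t.1 (monomial (ev t.2) 1)).sum := by
  induction L with
  | nil => simp [TL]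
  | cons t L ih =>
    rw [show TL (t :: L) = symmDiff (termsF t.1 t.2) (TL L) from rfl, sum_symmDiff_P5,
      List.map_cons, List.sum_cons, ih, sqK_monomial]

lemma mem_AplusS_of (L : List (ℕ × (Fin 5 → ℕ))) (hL : ∀ t ∈ L, 1 ≤ t.1 ∧ t.1 < 8) :
    (L.map fun t => SqK 5 t.1 (monomial (ev t.2) 1)).sum ∈ AplusS 5 3 := by
  induction L with
  | nil => rw [List.map_nil, List.sum_nil]; exact zero_mem _
  | cons t L ih =>
    rw [List.map_cons, List.sum_cons]
    refine add_mem (Submodule.subset_span ⟨t.1, (hL t (by simp)).1, ?_, _, rfl⟩)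
      (ih fun u hu => hL u (List.mem_cons_of_mem _ hu))
    rw [show (2 : ℕ) ^ 3 = 8 from by norm_num]
    exact (hL t (by simp)).2

def checkP (a : Fin 5 → ℕ) (L : List (ℕ × (Fin 5 → ℕ))) : Prop :=
  (∀ t ∈ L, 1 ≤ t.1 ∧ t.1 < 8) ∧ (∀ j, a j < 8) ∧ wtN a 2 ≠ 0 ∧ a ∈ TL L ∧
  ∀ c ∈ (TL L).erase a, (∑ j, c j) = (∑ j, a j) ∧ (∀ j, c j < 64) ∧ monLtP c a

instance (a : Fin 5 → ℕ) (L : List (ℕ × (Fin 5 → ℕ))) : Decidable (checkP a L) := by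
  unfold checkP; infer_instance

lemma sound (a : Fin 5 → ℕ) (L : List (ℕ × (Fin 5 → ℕ))) (h : checkP a L) :
    StrictlyInadmissible (ev a) := by
  obtain ⟨hL, ha8, hw2, haT, hS⟩ := h
  refine ⟨3, by norm_num, hw2, fun i hi => wt_ev_high a 3 ha8 i hi,
    ((TL L).erase a).image ev, ?_, ?_⟩
  · intro x hx
    rw [Finset.mem_image] at hx
    obtain ⟨c, hc, rfl⟩ := hx
    obtain ⟨hdeg, hb64, hlt⟩ := hS c hc
    exact ⟨hdeg, monLt_of_monLtP c a hb64 (fun j => lt_trans (ha8 j) (by norm_num)) hlt⟩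
  · have heq : ((monomial (ev a)) 1 + ∑ x ∈ ((TL L).erase a).image ev, (monomial x) 1 : P 5)
        = ∑ c ∈ TL L, monomial (ev c) 1 := by
      have himg : ∑ x ∈ Finset.image ev ((TL L).erase a), (monomial x (1 : ZMod 2) : P 5)
          = ∑ c ∈ (TL L).erase a, monomial (ev c) 1 :=
        Finset.sum_image (fun x _ y _ h => ev_inj x y h)
      rw [himg]
      exact Finset.add_sum_erase _ _ haT
    rw [heq, sum_TL]
    exact mem_AplusS_of L hL

end Sound
set_option maxRecDepth 100000
set_option maxHeartbeats 4000000
def relList : List ((Fin 5 → ℕ) × List (ℕ × (Fin 5 → ℕ))) := [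
  (![3,4,4,7,7], [(1, ![3,3,4,7,7]), (2, ![2,3,4,7,7])]),
  (![3,4,5,6,7], [(1, ![5,1,5,6,7]), (2, ![3,1,6,6,7]), (2, ![3,2,5,6,7]), (2, ![6,1,3,6,7])]),
  (![3,4,5,7,6], [(1, ![5,1,5,7,6]), (2, ![3,1,6,7,6]), (2, ![3,2,5,7,6]), (2, ![6,1,3,7,6])]),
  (![3,4,6,5,7], [(1, ![3,4,5,5,7])]),
  (![3,4,6,7,5], [(1, ![3,4,5,7,5])]),
  (![3,4,7,4,7], [(1, ![3,3,7,4,7]), (2, ![2,3,7,4,7])]),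
  (![3,4,7,5,6], [(1, ![5,1,7,5,6]), (2, ![3,1,7,6,6]), (2, ![3,2,7,5,6]), (2, ![6,1,7,3,6])]),
  (![3,4,7,6,5], [(1, ![3,4,7,5,5])]),
  (![3,4,7,7,4], [(1, ![3,3,7,7,4]), (2, ![2,3,7,7,4])]),
  (![3,5,4,6,7], [(1, ![5,5,1,6,7]), (2, ![3,5,2,6,7]), (2, ![3,6,1,6,7]), (2, ![6,3,1,6,7])]),
  (![3,5,4,7,6], [(1, ![5,5,1,7,6]), (2, ![3,5,2,7,6]), (2, ![3,6,1,7,6]), (2, ![6,3,1,7,6])]),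
  (![3,5,5,6,6], [(1, ![3,5,5,5,6]), (1, ![5,3,5,5,6]), (1, ![5,5,3,5,6]), (2, ![3,3,5,6,6]), (2, ![3,3,6,5,6]), (2, ![3,5,3,6,6]), (2, ![3,6,3,5,6]), (2, ![6,3,3,5,6])]),
  (![3,5,6,4,7], [(1, ![3,5,5,4,7]), (1, ![5,3,5,4,7]), (1, ![5,5,5,2,7]), (2, ![3,3,6,4,7]), (2, ![3,5,6,2,7]), (2, ![3,6,5,2,7]), (2, ![6,3,5,2,7])]),
  (![3,5,6,5,6], [(1, ![3,5,5,5,6]), (1, ![5,3,5,5,6]), (1, ![5,5,5,3,6]), (2, ![3,3,5,6,6]), (2, ![3,3,6,5,6]), (2, ![3,5,6,3,6]), (2, ![3,6,5,3,6]), (2, ![6,3,5,3,6])]),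
  (![3,5,6,6,5], [(1, ![3,5,5,6,5]), (1, ![5,3,5,6,5]), (1, ![5,5,5,6,3]), (2, ![3,3,5,6,6]), (2, ![3,3,6,6,5]), (2, ![3,5,6,6,3]), (2, ![3,6,5,6,3]), (2, ![6,3,5,6,3])]),
  (![3,5,6,7,4], [(1, ![3,5,5,7,4]), (1, ![5,3,5,7,4]), (1, ![5,5,5,7,2]), (2, ![3,3,6,7,4]), (2, ![3,5,6,7,2]), (2, ![3,6,5,7,2]), (2, ![6,3,5,7,2])]),
  (![3,5,7,4,6], [(1, ![5,5,7,1,6]), (2, ![3,5,7,2,6]), (2, ![3,6,7,1,6]), (2, ![6,3,7,1,6])]),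
  (![3,5,7,6,4], [(1, ![3,5,7,5,4]), (1, ![5,3,7,5,4]), (1, ![5,5,7,5,2]), (2, ![3,3,7,6,4]), (2, ![3,5,7,6,2]), (2, ![3,6,7,5,2]), (2, ![6,3,7,5,2])]),
  (![3,6,4,5,7], [(1, ![3,5,4,5,7])]),
  (![3,6,4,7,5], [(1, ![3,5,4,7,5])]),
  (![3,6,5,4,7], [(1, ![3,5,5,4,7])]),
  (![3,6,5,5,6], [(1, ![3,5,5,5,6])]),
  (![3,6,5,6,5], [(1, ![3,5,5,6,5])]),
  (![3,6,5,7,4], [(1, ![3,5,5,7,4])]),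
  (![3,6,6,5,5], [(1, ![3,6,5,5,5])]),
  (![3,6,7,4,5], [(1, ![3,5,7,4,5])]),
  (![3,6,7,5,4], [(1, ![3,5,7,5,4])]),
  (![3,7,4,4,7], [(1, ![3,7,3,4,7]), (2, ![2,7,3,4,7])]),
  (![3,7,4,5,6], [(1, ![5,7,1,5,6]), (2, ![3,7,1,6,6]), (2, ![3,7,2,5,6]), (2, ![6,7,1,3,6])]),
  (![3,7,4,6,5], [(1, ![3,7,4,5,5])]),
  (![3,7,4,7,4], [(1, ![3,7,3,7,4]), (2, ![2,7,3,7,4])]),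
  (![3,7,5,4,6], [(1, ![5,7,5,1,6]), (2, ![3,7,5,2,6]), (2, ![3,7,6,1,6]), (2, ![6,7,3,1,6])]),
  (![3,7,5,6,4], [(1, ![3,7,5,5,4]), (1, ![5,7,3,5,4]), (1, ![5,7,5,5,2]), (2, ![3,7,3,6,4]), (2, ![3,7,5,6,2]), (2, ![3,7,6,5,2]), (2, ![6,7,3,5,2])]),
  (![3,7,6,4,5], [(1, ![3,7,5,4,5])]),
  (![3,7,6,5,4], [(1, ![3,7,5,5,4])]),
  (![3,7,7,4,4], [(1, ![3,7,7,3,4]), (2, ![2,7,7,3,4])]),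
  (![4,3,4,7,7], [(1, ![3,3,4,7,7])]),
  (![4,3,5,6,7], [(2, ![2,3,5,6,7])]),
  (![4,3,5,7,6], [(2, ![2,3,5,7,6])]),
  (![4,3,6,5,7], [(1, ![4,3,5,5,7])]),
  (![4,3,6,7,5], [(1, ![4,3,5,7,5])]),
  (![4,3,7,4,7], [(1, ![3,3,7,4,7])]),
  (![4,3,7,5,6], [(2, ![2,3,7,5,6])]),
  (![4,3,7,6,5], [(1, ![4,3,7,5,5])]),
  (![4,3,7,7,4], [(1, ![3,3,7,7,4])]),
  (![4,4,3,7,7], [(1, ![4,3,3,7,7])]),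
  (![4,4,7,3,7], [(1, ![4,3,7,3,7])]),
  (![4,4,7,7,3], [(1, ![4,3,7,7,3])]),
  (![4,5,3,6,7], [(2, ![4,3,3,6,7])]),
  (![4,5,3,7,6], [(2, ![4,3,3,7,6])]),
  (![4,5,6,3,7], [(2, ![4,3,6,3,7])]),
  (![4,5,6,7,3], [(2, ![4,3,6,7,3])]),
  (![4,5,7,3,6], [(2, ![4,3,7,3,6])]),
  (![4,5,7,6,3], [(2, ![4,3,7,6,3])]),
  (![4,6,3,5,7], [(1, ![4,5,3,5,7])]),
  (![4,6,3,7,5], [(1, ![4,5,3,7,5])]),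
  (![4,6,5,3,7], [(1, ![4,5,5,3,7])]),
  (![4,6,5,7,3], [(1, ![4,5,5,7,3])]),
  (![4,6,7,3,5], [(1, ![4,5,7,3,5])]),
  (![4,6,7,5,3], [(1, ![4,5,7,5,3])]),
  (![4,7,3,4,7], [(1, ![3,7,3,4,7])]),
  (![4,7,3,5,6], [(2, ![2,7,3,5,6])]),
  (![4,7,3,6,5], [(1, ![4,7,3,5,5])]),
  (![4,7,3,7,4], [(1, ![3,7,3,7,4])]),
  (![4,7,4,3,7], [(1, ![4,7,3,3,7])]),
  (![4,7,4,7,3], [(1, ![4,7,3,7,3])]),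
  (![4,7,5,3,6], [(2, ![4,7,3,3,6])]),
  (![4,7,5,6,3], [(2, ![4,7,3,6,3])]),
  (![4,7,6,3,5], [(1, ![4,7,5,3,5])]),
  (![4,7,6,5,3], [(1, ![4,7,5,5,3])]),
  (![4,7,7,3,4], [(1, ![3,7,7,3,4])]),
  (![4,7,7,4,3], [(1, ![4,7,7,3,3])]),
  (![5,3,4,6,7], [(2, ![3,3,4,6,7])]),
  (![5,3,4,7,6], [(2, ![3,3,4,7,6])]),
  (![5,3,5,6,6], [(2, ![3,3,5,6,6])]),
  (![5,3,6,4,7], [(2, ![3,3,6,4,7])]),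
  (![5,3,6,5,6], [(2, ![3,3,6,5,6])]),
  (![5,3,6,6,5], [(2, ![3,3,6,6,5])]),
  (![5,3,6,7,4], [(2, ![3,3,6,7,4])]),
  (![5,3,7,4,6], [(2, ![3,3,7,4,6])]),
  (![5,3,7,6,4], [(2, ![3,3,7,6,4])]),
  (![5,4,3,6,7], [(2, ![5,2,3,6,7])]),
  (![5,4,3,7,6], [(2, ![5,2,3,7,6])]),
  (![5,4,6,3,7], [(2, ![5,2,6,3,7])]),
  (![5,4,6,7,3], [(2, ![5,2,6,7,3])]),
  (![5,4,7,3,6], [(2, ![5,2,7,3,6])]),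
  (![5,4,7,6,3], [(2, ![5,2,7,6,3])]),
  (![5,5,3,6,6], [(2, ![5,3,3,6,6])]),
  (![5,5,6,3,6], [(2, ![5,3,6,3,6])]),
  (![5,5,6,6,3], [(2, ![5,3,6,6,3])]),
  (![5,6,3,4,7], [(2, ![3,6,3,4,7])]),
  (![5,6,3,5,6], [(2, ![3,6,3,5,6])]),
  (![5,6,3,6,5], [(2, ![3,6,3,6,5])]),
  (![5,6,3,7,4], [(2, ![3,6,3,7,4])]),
  (![5,6,4,3,7], [(2, ![5,6,2,3,7])]),
  (![5,6,4,7,3], [(2, ![5,6,2,7,3])]),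
  (![5,6,5,3,6], [(2, ![5,6,3,3,6])]),
  (![5,6,5,6,3], [(2, ![5,6,3,6,3])]),
  (![5,6,6,3,5], [(2, ![3,6,6,3,5])]),
  (![5,6,6,5,3], [(2, ![5,6,6,3,3])]),
  (![5,6,7,3,4], [(2, ![3,6,7,3,4])]),
  (![5,6,7,4,3], [(2, ![5,6,7,2,3])]),
  (![5,7,3,4,6], [(2, ![3,7,3,4,6])]),
  (![5,7,3,6,4], [(2, ![3,7,3,6,4])]),
  (![5,7,4,3,6], [(2, ![5,7,2,3,6])]),
  (![5,7,4,6,3], [(2, ![5,7,2,6,3])]),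
  (![5,7,6,3,4], [(2, ![3,7,6,3,4])]),
  (![5,7,6,4,3], [(2, ![5,7,6,2,3])]),
  (![6,3,4,5,7], [(1, ![5,3,4,5,7])]),
  (![6,3,4,7,5], [(1, ![5,3,4,7,5])]),
  (![6,3,5,4,7], [(1, ![5,3,5,4,7])]),
  (![6,3,5,5,6], [(1, ![5,3,5,5,6])]),
  (![6,3,5,6,5], [(1, ![5,3,5,6,5])]),
  (![6,3,5,7,4], [(1, ![5,3,5,7,4])]),
  (![6,3,6,5,5], [(1, ![6,3,5,5,5])]),
  (![6,3,7,4,5], [(1, ![5,3,7,4,5])]),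
  (![6,3,7,5,4], [(1, ![5,3,7,5,4])]),
  (![6,4,3,5,7], [(1, ![5,4,3,5,7])]),
  (![6,4,3,7,5], [(1, ![5,4,3,7,5])]),
  (![6,4,5,3,7], [(1, ![5,4,5,3,7])]),
  (![6,4,5,7,3], [(1, ![5,4,5,7,3])]),
  (![6,4,7,3,5], [(1, ![5,4,7,3,5])]),
  (![6,4,7,5,3], [(1, ![5,4,7,5,3])]),
  (![6,5,3,4,7], [(1, ![5,5,3,4,7])]),
  (![6,5,3,5,6], [(1, ![5,5,3,5,6])]),
  (![6,5,3,6,5], [(1, ![5,5,3,6,5])]),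
  (![6,5,3,7,4], [(1, ![5,5,3,7,4])]),
  (![6,5,4,3,7], [(1, ![5,5,4,3,7])]),
  (![6,5,4,7,3], [(1, ![5,5,4,7,3])]),
  (![6,5,5,3,6], [(1, ![5,5,5,3,6])]),
  (![6,5,5,6,3], [(1, ![5,5,5,6,3])]),
  (![6,5,6,3,5], [(1, ![5,5,6,3,5])]),
  (![6,5,6,5,3], [(1, ![5,5,6,5,3])]),
  (![6,5,7,3,4], [(1, ![5,5,7,3,4])]),
  (![6,5,7,4,3], [(1, ![5,5,7,4,3])]),
  (![6,6,3,5,5], [(1, ![6,5,3,5,5])]),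
  (![6,6,5,3,5], [(1, ![6,5,5,3,5])]),
  (![6,6,5,5,3], [(1, ![6,5,5,5,3])]),
  (![6,7,3,4,5], [(1, ![5,7,3,4,5])]),
  (![6,7,3,5,4], [(1, ![5,7,3,5,4])]),
  (![6,7,4,3,5], [(1, ![5,7,4,3,5])]),
  (![6,7,4,5,3], [(1, ![5,7,4,5,3])]),
  (![6,7,5,3,4], [(1, ![5,7,5,3,4])]),
  (![6,7,5,4,3], [(1, ![5,7,5,4,3])]),
  (![7,3,4,4,7], [(1, ![7,3,3,4,7]), (2, ![7,2,3,4,7])]),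
  (![7,3,4,5,6], [(1, ![7,5,1,5,6]), (2, ![7,3,1,6,6]), (2, ![7,3,2,5,6]), (2, ![7,6,1,3,6])]),
  (![7,3,4,6,5], [(1, ![7,3,4,5,5])]),
  (![7,3,4,7,4], [(1, ![7,3,3,7,4]), (2, ![7,2,3,7,4])]),
  (![7,3,5,4,6], [(1, ![7,5,5,1,6]), (2, ![7,3,5,2,6]), (2, ![7,3,6,1,6]), (2, ![7,6,3,1,6])]),
  (![7,3,5,6,4], [(1, ![7,3,5,5,4]), (1, ![7,5,3,5,4]), (1, ![7,5,5,5,2]), (2, ![7,3,3,6,4]), (2, ![7,3,5,6,2]), (2, ![7,3,6,5,2]), (2, ![7,6,3,5,2])]),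
  (![7,3,6,4,5], [(1, ![7,3,5,4,5])]),
  (![7,3,6,5,4], [(1, ![7,3,5,5,4])]),
  (![7,3,7,4,4], [(1, ![7,3,7,3,4]), (2, ![7,2,7,3,4])]),
  (![7,4,3,4,7], [(1, ![7,3,3,4,7])]),
  (![7,4,3,5,6], [(2, ![7,2,3,5,6])]),
  (![7,4,3,6,5], [(1, ![7,4,3,5,5])]),
  (![7,4,3,7,4], [(1, ![7,3,3,7,4])]),
  (![7,4,4,3,7], [(1, ![7,4,3,3,7])]),
  (![7,4,4,7,3], [(1, ![7,4,3,7,3])]),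
  (![7,4,5,3,6], [(2, ![7,4,3,3,6])]),
  (![7,4,5,6,3], [(2, ![7,4,3,6,3])]),
  (![7,4,6,3,5], [(1, ![7,4,5,3,5])]),
  (![7,4,6,5,3], [(1, ![7,4,5,5,3])]),
  (![7,4,7,3,4], [(1, ![7,3,7,3,4])]),
  (![7,4,7,4,3], [(1, ![7,4,7,3,3])]),
  (![7,5,3,4,6], [(2, ![7,3,3,4,6])]),
  (![7,5,3,6,4], [(2, ![7,3,3,6,4])]),
  (![7,5,4,3,6], [(2, ![7,5,2,3,6])]),
  (![7,5,4,6,3], [(2, ![7,5,2,6,3])]),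
  (![7,5,6,3,4], [(2, ![7,3,6,3,4])]),
  (![7,5,6,4,3], [(2, ![7,5,6,2,3])]),
  (![7,6,3,4,5], [(1, ![7,5,3,4,5])]),
  (![7,6,3,5,4], [(1, ![7,5,3,5,4])]),
  (![7,6,4,3,5], [(1, ![7,5,4,3,5])]),
  (![7,6,4,5,3], [(1, ![7,5,4,5,3])]),
  (![7,6,5,3,4], [(1, ![7,5,5,3,4])]),
  (![7,6,5,4,3], [(1, ![7,5,5,4,3])]),
  (![7,7,3,4,4], [(1, ![7,7,3,3,4]), (2, ![7,7,2,3,4])]),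
  (![7,7,4,3,4], [(1, ![7,7,3,3,4])]),
  (![7,7,4,4,3], [(1, ![7,7,4,3,3])])]
section Final

lemma hAll : ∀ r ∈ relList, checkP r.1 r.2 := by decide

lemma fromMem (c : Fin 5 → ℕ) (h : c ∈ relList.map Prod.fst) : StrictlyInadmissible (ev c) := by
  rw [List.mem_map] at h
  obtain ⟨r, hr, rfl⟩ := h
  exact sound _ _ (hAll r hr)

lemma eta5 (f : Fin 5 → ℕ) : ![f 0, f 1, f 2, f 3, f 4] = f := by
  funext i; fin_cases i <;> rfl

lemma memA1 : ∀ i0 i1 i2 i3 i4 : Fin 5, i0 ≠ i1 → i0 ≠ i2 → i0 ≠ i3 → i0 ≠ i4 →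
    i1 ≠ i2 → i1 ≠ i3 → i1 ≠ i4 → i2 ≠ i3 → i2 ≠ i4 → i3 ≠ i4 →
    (![(![3,4,4,7,7] : Fin 5 → ℕ) i0, ![3,4,4,7,7] i1, ![3,4,4,7,7] i2,
       ![3,4,4,7,7] i3, ![3,4,4,7,7] i4]) ∈ relList.map Prod.fst := by decide

lemma memA2 : ∀ i0 i1 i2 i3 i4 : Fin 5, i0 ≠ i1 → i0 ≠ i2 → i0 ≠ i3 → i0 ≠ i4 →
    i1 ≠ i2 → i1 ≠ i3 → i1 ≠ i4 → i2 ≠ i3 → i2 ≠ i4 → i3 ≠ i4 →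
    (![(![3,4,5,6,7] : Fin 5 → ℕ) i0, ![3,4,5,6,7] i1, ![3,4,5,6,7] i2,
       ![3,4,5,6,7] i3, ![3,4,5,6,7] i4]) ∈ relList.map Prod.fst := by decide

lemma memA3 : ∀ i0 i1 i2 i3 i4 : Fin 5, i0 ≠ i1 → i0 ≠ i2 → i0 ≠ i3 → i0 ≠ i4 →
    i1 ≠ i2 → i1 ≠ i3 → i1 ≠ i4 → i2 ≠ i3 → i2 ≠ i4 → i3 ≠ i4 →
    (![(![3,5,5,6,6] : Fin 5 → ℕ) i0, ![3,5,5,6,6] i1, ![3,5,5,6,6] i2,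
       ![3,5,5,6,6] i3, ![3,5,5,6,6] i4]) ∈ relList.map Prod.fst := by decide

end Final

/-- Every monomial of `P_5` obtained by permuting the variables in one of
`x_1^3x_2^4x_3^4x_4^7x_5^7`, `x_1^3x_2^4x_3^5x_4^6x_5^7`, `x_1^3x_2^5x_3^5x_4^6x_5^6`
is strictly inadmissible. -/
theorem statement7 (σ : Equiv.Perm (Fin 5)) :
    ∀ v ∈ ([![3,4,4,7,7], ![3,4,5,6,7], ![3,5,5,6,6]] : List (Fin 5 → ℕ)),
      StrictlyInadmissible (ev (v ∘ ⇑σ)) := by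
  have hinj := σ.injective
  have d01 : σ 0 ≠ σ 1 := fun h => absurd (hinj h) (by decide)
  have d02 : σ 0 ≠ σ 2 := fun h => absurd (hinj h) (by decide)
  have d03 : σ 0 ≠ σ 3 := fun h => absurd (hinj h) (by decide)
  have d04 : σ 0 ≠ σ 4 := fun h => absurd (hinj h) (by decide)
  have d12 : σ 1 ≠ σ 2 := fun h => absurd (hinj h) (by decide)
  have d13 : σ 1 ≠ σ 3 := fun h => absurd (hinj h) (by decide)
  have d14 : σ 1 ≠ σ 4 := fun h => absurd (hinj h) (by decide)
  have d23 : σ 2 ≠ σ 3 := fun h => absurd (hinj h) (by decide)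
  have d24 : σ 2 ≠ σ 4 := fun h => absurd (hinj h) (by decide)
  have d34 : σ 3 ≠ σ 4 := fun h => absurd (hinj h) (by decide)
  intro v hv
  fin_cases hv
  · have h := memA1 (σ 0) (σ 1) (σ 2) (σ 3) (σ 4) d01 d02 d03 d04 d12 d13 d14 d23 d24 d34
    rw [← eta5 (![3,4,4,7,7] ∘ ⇑σ)]
    exact fromMem _ h
  · have h := memA2 (σ 0) (σ 1) (σ 2) (σ 3) (σ 4) d01 d02 d03 d04 d12 d13 d14 d23 d24 d34
    rw [← eta5 (![3,4,5,6,7] ∘ ⇑σ)]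
    exact fromMem _ h
  · have h := memA3 (σ 0) (σ 1) (σ 2) (σ 3) (σ 4) d01 d02 d03 d04 d12 d13 d14 d23 d24 d34
    rw [← eta5 (![3,5,5,6,6] ∘ ⇑σ)]
    exact fromMem _ h
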